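/- arXiv:1802.07041 — 5 statements merged into one kernel-verified Lean document; each statement's English description precedes it below -/
import Mathlib

section
/- Let d ≥ 2, k ≥ 1 be integers and 0 ≤ ε < 1/d a real number. If nonnegative reals I and C satisfy I < d·(k + C) and C < k + εI, then C < ((1+dε)/(1-dε))·k and I < d·(1 + (1+dε)/(1-dε))·k. -/
theorem soft_heap_dary_count (d k : ℕ) (hd : 2 ≤ d) (hk : 1 ≤ k) (ε I C : ℝ)
    (hε0 : 0 ≤ ε) (hε : ε < 1 / d) (hI0 : 0 ≤ I) (hC0 : 0 ≤ C)
    (hI : I < d * (k + C)) (hC : C < k + ε * I) :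
    C < ((1 + d*ε)/(1 - d*ε)) * k ∧ I < d * (1 + (1 + d*ε)/(1 - d*ε)) * k := by
  have hd0 : (0:ℝ) < d := by positivity
  have hpos : (0:ℝ) < 1 - d*ε := by
    have := (lt_div_iff₀ hd0).mp hε
    nlinarith
  have hk1 : (1:ℝ) ≤ k := by exact_mod_cast hk
  have h1 : C < ((1 + d*ε)/(1 - d*ε)) * k := by
    rw [div_mul_eq_mul_div, lt_div_iff₀ hpos]
    nlinarith
  refine ⟨h1, ?_⟩
  calc I < d * (k + C) := hI
    _ < d * (1 + (1 + d*ε)/(1 - d*ε)) * k := by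
        have : k + C < (1 + (1 + d*ε)/(1 - d*ε)) * k := by nlinarith
        nlinarith
end

section
/- Let n₁, …, n_m ≥ 1 be integers and let N = Σᵢ nᵢ. For 0 ≤ k ≤ N, let f(k) be the number of m-tuples (k₁,…,k_m) with 0 ≤ kᵢ ≤ nᵢ and Σᵢ kᵢ = k. Then f is nondecreasing on 0 ≤ k ≤ ⌊N/2⌋ and nonincreasing on ⌈N/2⌉ ≤ k ≤ N; in particular f attains its maximum at k = ⌊N/2⌋. -/
/-!
Sorting tuples by their first coordinate shows that adding a coordinate bounded by `n`
replaces the counting sequence `a` by its window sums `k ↦ a (k - n) + ⋯ + a k`. Window sums of a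
sequence symmetric about `N / 2` are symmetric about `(N + n) / 2`, and one step of the window
changes the sum by `a (k + 1) - a (k - n)`, which is nonnegative left of the new centre because
`k - n` is then farther from `N / 2` than `k + 1`.
-/

open Finset

/-- `a` is symmetric about `N / 2` and grows towards it: `j ≤ k` with `j + k ≤ N` says that `k` is
at least as close to `N / 2` as `j` is. -/
structure IsSymmUnimodal {M : Type*} [Preorder M] (N : ℤ) (a : ℤ → M) : Prop where
  symm : ∀ k, a (N - k) = a k
  mono : ∀ j k, j ≤ k → j + k ≤ N → a j ≤ a k

namespace IsSymmUnimodal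

variable {M : Type*} {N : ℤ} {a : ℤ → M}

theorem of_le_succ [Preorder M] (hsymm : ∀ k, a (N - k) = a k)
    (hsucc : ∀ k, k + (k + 1) ≤ N → a k ≤ a (k + 1)) : IsSymmUnimodal N a := by
  have hleft : ∀ j k, j ≤ k → 2 * k ≤ N → a j ≤ a k := by
    intro j k hjk hk
    induction k, hjk using Int.leInduction with
    | base => exact le_rfl
    | succ k hjk ih => exact (ih (by omega)).trans (hsucc k (by omega))
  refine ⟨hsymm, fun j k hjk hjkN => ?_⟩
  rcases le_or_gt (2 * k) N with hk | hk
  · exact hleft j k hjk hk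
  · rw [← hsymm k]
    exact hleft j (N - k) (by omega) (by omega)

theorem sum_range_sub [AddCommMonoid M] [Preorder M] [AddLeftMono M]
    (h : IsSymmUnimodal N a) (n : ℕ) :
    IsSymmUnimodal (N + n) fun k => ∑ i ∈ range (n + 1), a (k - i) := by
  refine of_le_succ (fun k => ?_) (fun k hk => ?_)
  · rw [← sum_range_reflect]
    refine sum_congr rfl fun i hi => ?_
    have hi : ((n + 1 - 1 - i : ℕ) : ℤ) = n - i := by rw [mem_range] at hi; omega
    rw [hi, ← h.symm]
    ring_nf
  · rw [sum_range_succ, sum_range_succ']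
    simp only [Nat.cast_add, Nat.cast_one, Nat.cast_zero, add_sub_add_right_eq_sub, sub_zero]
    gcongr
    exact h.mono _ _ (by omega) (by omega)

end IsSymmUnimodal

/-- Indexed by `ℤ` so that the shifts `k - j` in the recursion need no truncated subtraction. -/
noncomputable def boundedCompositionCount {m : ℕ} (n : Fin m → ℕ) (k : ℤ) : ℕ :=
  Nat.card {t : Fin m → ℕ // (∀ i, t i ≤ n i) ∧ ((∑ i, t i : ℕ) : ℤ) = k}

instance {m : ℕ} (n : Fin m → ℕ) (k : ℤ) :
    Finite {t : Fin m → ℕ // (∀ i, t i ≤ n i) ∧ ((∑ i, t i : ℕ) : ℤ) = k} :=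
  Finite.of_injective (fun t i => (⟨t.1 i, Nat.lt_succ_of_le (t.2.1 i)⟩ : Fin (n i + 1)))
    fun _ _ hst => Subtype.ext <| funext fun i => congrArg Fin.val (congrFun hst i)

theorem boundedCompositionCount_succ {m : ℕ} (n : Fin (m + 1) → ℕ) (k : ℤ) :
    boundedCompositionCount n k =
      ∑ j ∈ range (n 0 + 1), boundedCompositionCount (Fin.tail n) (k - j) := by
  rw [← Fin.sum_univ_eq_sum_range (fun j => boundedCompositionCount (Fin.tail n) (k - j))]
  unfold boundedCompositionCount
  rw [← Nat.card_sigma]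
  refine Nat.card_congr
    { toFun := fun t => ⟨⟨t.1 0, Nat.lt_succ_of_le (t.2.1 0)⟩, Fin.tail t.1, fun i => t.2.1 i.succ, ?_⟩
      invFun := fun s => ⟨Fin.cons s.1.1 s.2.1, Fin.cases (Nat.le_of_lt_succ s.1.2) s.2.2.1, ?_⟩
      left_inv := fun t => Subtype.ext (Fin.cons_self_tail t.1)
      right_inv := fun s => ?_ }
  · have := t.2.2
    rw [Fin.sum_univ_succ, Nat.cast_add] at this
    simp only [Fin.tail]
    omega
  · rw [Fin.sum_univ_succ, Nat.cast_add]
    simp only [Fin.cons_zero, Fin.cons_succ]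
    have := s.2.2.2
    omega
  · exact Sigma.subtype_ext rfl (Fin.tail_cons (α := fun _ => ℕ) s.1.1 s.2.1)

theorem isSymmUnimodal_boundedCompositionCount_zero (n : Fin 0 → ℕ) :
    IsSymmUnimodal 0 (boundedCompositionCount n) := by
  have hcount : ∀ k, boundedCompositionCount n k = if k = 0 then 1 else 0 := by
    intro k
    by_cases hk : k = 0 <;> simp [boundedCompositionCount, hk, eq_comm]
  refine ⟨fun k => by simp [hcount], fun j k hjk hjk0 => ?_⟩
  simp only [hcount]
  split_ifs <;> omega

theorem isSymmUnimodal_boundedCompositionCount {m : ℕ} (n : Fin m → ℕ) :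
    IsSymmUnimodal (∑ i, n i : ℕ) (boundedCompositionCount n) := by
  induction m with
  | zero => simpa using isSymmUnimodal_boundedCompositionCount_zero n
  | succ m ih =>
    have h := (ih (Fin.tail n)).sum_range_sub (n 0)
    rw [Fin.sum_univ_succ, Nat.cast_add, add_comm, funext (boundedCompositionCount_succ n)]
    exact h

theorem bounded_compositions_unimodal_general (m : ℕ) (n : Fin m → ℕ) (f : ℕ → ℕ)
    (hf : ∀ k, f k = Nat.card {t : Fin m → ℕ // (∀ i, t i ≤ n i) ∧ ∑ i, t i = k}) :
    (∀ k₁ k₂, k₁ ≤ k₂ → k₂ ≤ (∑ i, n i) / 2 → f k₁ ≤ f k₂) ∧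
    (∀ k₁ k₂, ((∑ i, n i) + 1) / 2 ≤ k₁ → k₁ ≤ k₂ → k₂ ≤ ∑ i, n i → f k₂ ≤ f k₁) ∧
    (∀ k, k ≤ ∑ i, n i → f k ≤ f ((∑ i, n i) / 2)) := by
  obtain ⟨hsymm, hmono⟩ := isSymmUnimodal_boundedCompositionCount n
  have hfg : ∀ k, f k = boundedCompositionCount n k := by
    simp only [hf, boundedCompositionCount, Nat.cast_inj, implies_true]
  set N := ∑ i, n i
  refine ⟨fun k₁ k₂ h₁₂ h₂ => ?_, fun k₁ k₂ h₁ h₁₂ h₂ => ?_, fun k hk => ?_⟩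
  · rw [hfg, hfg]
    exact hmono _ _ (by omega) (by omega)
  · rw [hfg, hfg, ← hsymm k₁, ← hsymm k₂]
    exact hmono _ _ (by omega) (by omega)
  · rw [hfg, hfg]
    rcases le_or_gt (2 * k) N with hk' | hk'
    · exact hmono _ _ (by omega) (by omega)
    · rw [← hsymm k]
      exact hmono _ _ (by omega) (by omega)

theorem bounded_compositions_unimodal (m : ℕ) (hm : 1 ≤ m) (n : Fin m → ℕ)
    (hn : ∀ i, 1 ≤ n i) (f : ℕ → ℕ)
    (hf : ∀ k, f k = Nat.card {t : Fin m → ℕ // (∀ i, t i ≤ n i) ∧ ∑ i, t i = k}) :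
    (∀ k₁ k₂, k₁ ≤ k₂ → k₂ ≤ (∑ i, n i) / 2 → f k₁ ≤ f k₂) ∧
    (∀ k₁ k₂, ((∑ i, n i) + 1) / 2 ≤ k₁ → k₁ ≤ k₂ → k₂ ≤ ∑ i, n i → f k₂ ≤ f k₁) ∧
    (∀ k, k ≤ ∑ i, n i → f k ≤ f ((∑ i, n i) / 2)) :=
  bounded_compositions_unimodal_general m n f hf
end

section
/- Let n₁, …, n_m ≥ 1 be integers, N = Σᵢ nᵢ, and let f(k) be the number of m-tuples (k₁,…,k_m) with 0 ≤ kᵢ ≤ nᵢ and Σᵢ kᵢ = k. Then f(⌊N/2⌋) ≥ (Πᵢ (nᵢ+1)) / (N+1). -/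
/-!
The count `c(k)` of tuples `f ≤ n` with `∑ f = k` is symmetric, `c(k) = c(N - k)` via `f ↦ n - f`,
and unimodal. Unimodality goes by induction on the number of parts: splitting off the first part
writes the new count as a window sum `d(k) = ∑_{t ≤ a} c(k - t)`, whose increment
`d(k + 1) - d(k) = c(k + 1) - c(k - a)` is nonnegative below the centre by unimodality of `c`.
Hence `c(⌊N/2⌋)` is the largest of the `N + 1` values `c(0), …, c(N)`, which sum to `∏ (nᵢ + 1)`.
-/

open Finset

theorem apply_le_apply_of_symm_of_le_succ {α : Type*} [Preorder α] {c : ℤ → α} {N : ℤ}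
    (hsymm : ∀ k, c k = c (N - k)) (hstep : ∀ k, 2 * k + 1 ≤ N → c k ≤ c (k + 1))
    {j j' : ℤ} (hjj' : j ≤ j') (hN : j + j' ≤ N) : c j ≤ c j' := by
  have below_center : ∀ j', j ≤ j' → 2 * j' ≤ N + 1 → c j ≤ c j' := by
    intro j' hjj' hj'
    induction j', hjj' using Int.leInduction with
    | base => exact le_rfl
    | succ i hji ih => exact (ih (by omega)).trans (hstep i (by omega))
  rcases le_or_gt (2 * j') (N + 1) with h | h
  · exact below_center j' hjj' h
  · rw [hsymm j']
    exact below_center (N - j') (by omega) (by omega)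

theorem sum_range_sub_le_sum_range_succ_sub {α : Type*} [AddCommMonoid α] [PartialOrder α]
    [IsOrderedAddMonoid α] (c : ℤ → α) (a : ℕ) (k : ℤ) (h : c (k - a) ≤ c (k + 1)) :
    ∑ t ∈ range (a + 1), c (k - t) ≤ ∑ t ∈ range (a + 1), c (k + 1 - t) := by
  rw [sum_range_succ, sum_range_succ']
  simp only [Nat.cast_add, Nat.cast_one, Nat.cast_zero, sub_zero, add_sub_add_right_eq_sub]
  exact add_le_add_right h _

/-- The sum `k` ranges over `ℤ`, so that the counts form a sequence on `ℤ` supported on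
`[0, ∑ i, n i]` and the symmetry `k ↦ ∑ i, n i - k` and the shifts `k - t` need no truncation. -/
def boundedCompositions {m : ℕ} (n : Fin m → ℕ) (k : ℤ) : Finset (Fin m → ℕ) :=
  {f ∈ Fintype.piFinset fun i => range (n i + 1) | ((∑ i, f i : ℕ) : ℤ) = k}

namespace boundedCompositions

variable {m : ℕ}

@[simp]
theorem mem_iff {n f : Fin m → ℕ} {k : ℤ} :
    f ∈ boundedCompositions n k ↔ f ≤ n ∧ ((∑ i, f i : ℕ) : ℤ) = k := by
  simp [boundedCompositions, Pi.le_def]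

theorem eq_empty_of_neg (n : Fin m → ℕ) {k : ℤ} (hk : k < 0) : boundedCompositions n k = ∅ := by
  ext f
  simp only [mem_iff, notMem_empty, iff_false, not_and]
  omega

theorem sum_card (n : Fin m → ℕ) :
    ∑ k ∈ range (∑ i, n i + 1), #(boundedCompositions n k) = ∏ i, (n i + 1) := by
  have hsum_mem : ∀ f ∈ Fintype.piFinset fun i => range (n i + 1),
      ∑ i, f i ∈ range (∑ i, n i + 1) := by
    intro f hf
    simp only [Fintype.mem_piFinset, mem_range, Nat.lt_succ_iff] at hf ⊢
    exact sum_le_sum fun i _ => hf i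
  have hcard : ∏ i, (n i + 1) = #(Fintype.piFinset fun i => range (n i + 1)) := by simp
  rw [hcard, card_eq_sum_card_fiberwise hsum_mem]
  refine sum_congr rfl fun k _ => ?_
  simp only [boundedCompositions, Nat.cast_inj]

theorem sub_mem {n f : Fin m → ℕ} {k : ℤ} (hf : f ∈ boundedCompositions n k) :
    n - f ∈ boundedCompositions n ((∑ i, n i : ℕ) - k) := by
  rw [mem_iff] at hf ⊢
  obtain ⟨hfn, rfl⟩ := hf
  refine ⟨tsub_le_self, ?_⟩
  rw [Pi.sub_def, sum_tsub_distrib _ fun i _ => hfn i, Nat.cast_sub (sum_le_sum fun i _ => hfn i)]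

theorem card_symm (n : Fin m → ℕ) (k : ℤ) :
    #(boundedCompositions n k) = #(boundedCompositions n ((∑ i, n i : ℕ) - k)) := by
  refine card_nbij' (n - ·) (n - ·) (fun f hf => sub_mem hf) (fun f hf => ?_) ?_ ?_
  · simpa using sub_mem hf
  all_goals
    intro f hf
    exact tsub_tsub_cancel_of_le (mem_iff.1 hf).1

theorem card_succ (n : Fin (m + 1) → ℕ) (k : ℤ) :
    #(boundedCompositions n k) =
      ∑ t ∈ range (n 0 + 1), #(boundedCompositions (Fin.tail n) (k - t)) := by
  have head_mem : ∀ f ∈ boundedCompositions n k, f 0 ∈ range (n 0 + 1) := fun f hf =>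
    mem_range_succ_iff.2 ((mem_iff.1 hf).1 0)
  rw [card_eq_sum_card_fiberwise head_mem]
  refine sum_congr rfl fun t ht => ?_
  have hinj : Function.Injective (Fin.cons (α := fun _ : Fin (m + 1) => ℕ) t) :=
    Fin.cons_right_injective (α := fun _ : Fin (m + 1) => ℕ) t
  rw [← card_image_of_injective _ hinj]
  congr 1
  ext f
  obtain ⟨a, g, rfl⟩ : ∃ a g, f = Fin.cons a g := ⟨f 0, Fin.tail f, (Fin.cons_self_tail f).symm⟩
  rw [mem_range_succ_iff] at ht
  simp only [mem_filter, mem_iff, mem_image, Fin.cons_le, Fin.cons_zero, Fin.sum_univ_succ,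
    Fin.cons_succ, Fin.cons_inj, Nat.cast_add, Nat.cast_sum]
  constructor
  · rintro ⟨⟨⟨_, hg⟩, hsum⟩, rfl⟩
    exact ⟨g, ⟨hg, by omega⟩, rfl, rfl⟩
  · rintro ⟨g, ⟨hg, hsum⟩, rfl, rfl⟩
    exact ⟨⟨⟨ht, hg⟩, by omega⟩, rfl⟩

theorem card_le_card_of_le_of_add_le (n : Fin m → ℕ) {j j' : ℤ} (hjj' : j ≤ j')
    (hN : j + j' ≤ (∑ i, n i : ℕ)) :
    #(boundedCompositions n j) ≤ #(boundedCompositions n j') := by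
  induction m generalizing j j' with
  | zero =>
    refine apply_le_apply_of_symm_of_le_succ (card_symm n) (fun k hk => ?_) hjj' hN
    rw [eq_empty_of_neg n (by simp only [Fin.sum_univ_zero, Nat.cast_zero] at hk; omega)]
    exact Nat.zero_le _
  | succ m ih =>
    refine apply_le_apply_of_symm_of_le_succ (card_symm n) (fun k hk => ?_) hjj' hN
    rw [card_succ, card_succ]
    apply sum_range_sub_le_sum_range_succ_sub fun i => #(boundedCompositions (Fin.tail n) i)
    refine ih (Fin.tail n) (by omega) ?_
    simp only [Fin.sum_univ_succ, Nat.cast_add] at hk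
    simp only [Fin.tail]
    omega

theorem card_le_card_half (n : Fin m → ℕ) (k : ℤ) :
    #(boundedCompositions n k) ≤ #(boundedCompositions n ((∑ i, n i) / 2 : ℕ)) := by
  rcases le_or_gt k ((∑ i, n i) / 2 : ℕ) with hk | hk
  · exact card_le_card_of_le_of_add_le n hk (by omega)
  · rw [card_symm n k]
    exact card_le_card_of_le_of_add_le n (by omega) (by omega)

end boundedCompositions

theorem bounded_compositions_max_ge_average_general (m : ℕ) (n : Fin m → ℕ) :
    ((∏ i, (n i + 1) : ℕ) : ℝ) / (((∑ i, n i : ℕ) : ℝ) + 1) ≤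
      (Nat.card {f : Fin m → ℕ // (∀ i, f i ≤ n i) ∧ ∑ i, f i = (∑ i, n i) / 2} : ℝ) := by
  set N := ∑ i, n i
  have hcard : Nat.card {f : Fin m → ℕ // (∀ i, f i ≤ n i) ∧ ∑ i, f i = N / 2} =
      #(boundedCompositions n (N / 2 : ℕ)) := by
    rw [← Nat.card_eq_finsetCard]
    exact Nat.card_congr <| Equiv.subtypeEquivRight fun f => by
      simp only [boundedCompositions.mem_iff, Pi.le_def, Nat.cast_inj]
  have hprod : ∏ i, (n i + 1) ≤ (N + 1) * #(boundedCompositions n (N / 2 : ℕ)) := by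
    have := sum_le_card_nsmul (range (N + 1)) _ _ fun k _ =>
      boundedCompositions.card_le_card_half n k
    rwa [boundedCompositions.sum_card, card_range, smul_eq_mul] at this
  rw [hcard, div_le_iff₀ (by positivity)]
  exact_mod_cast hprod.trans_eq (mul_comm _ _)

theorem bounded_compositions_max_ge_average (m : ℕ) (hm : 1 ≤ m) (n : Fin m → ℕ)
    (hn : ∀ i, 1 ≤ n i) :
    ((∏ i, (n i + 1) : ℕ) : ℝ) / (((∑ i, n i : ℕ) : ℝ) + 1) ≤
      (Nat.card {f : Fin m → ℕ // (∀ i, f i ≤ n i) ∧ ∑ i, f i = (∑ i, n i) / 2} : ℝ) :=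
  bounded_compositions_max_ge_average_general m n
end

section
/- Let r₁ ≥ 1 be an integer with exactly i ones in its binary representation, and let ℓ ≥ 1 be the index of the rightmost 1 of r₁ (i.e., 2^ℓ divides r₁ but 2^{ℓ+1} does not). Then an integer s with r₁ < s < r₁ + 2^ℓ has at most i+1 ones in its binary representation if and only if s = r₁ + 2^j for some 0 ≤ j < ℓ. -/
lemma sum_digits_two_pos : ∀ t, 0 < t → 0 < (Nat.digits 2 t).sum := by
  intro t
  induction t using Nat.strong_induction_on with
  | _ t ih =>
    intro ht
    rw [Nat.digits_def' one_lt_two ht, List.sum_cons]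
    rcases Nat.eq_zero_or_pos (t % 2) with h2 | h2
    · have htd : 0 < t / 2 := Nat.div_pos (by omega) (by norm_num)
      have := ih (t / 2) (Nat.div_lt_self ht (by norm_num)) htd
      omega
    · omega

lemma sum_digits_two_le_one_iff : ∀ t, 0 < t →
    ((Nat.digits 2 t).sum ≤ 1 ↔ ∃ j, t = 2 ^ j) := by
  intro t
  induction t using Nat.strong_induction_on with
  | _ t ih =>
    intro ht
    rw [Nat.digits_def' one_lt_two ht, List.sum_cons]
    rcases Nat.even_or_odd t with he | ho
    · have h2 : t % 2 = 0 := Nat.even_iff.mp he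
      have htd : 0 < t / 2 := Nat.div_pos (by omega) (by norm_num)
      rw [h2, Nat.zero_add, ih (t / 2) (Nat.div_lt_self ht (by norm_num)) htd]
      constructor
      · rintro ⟨j, hj⟩
        exact ⟨j + 1, by rw [pow_succ]; omega⟩
      · rintro ⟨j, hj⟩
        rcases j with _ | j
        · simp at hj; omega
        · exact ⟨j, by rw [pow_succ] at hj; omega⟩
    · have h2 : t % 2 = 1 := Nat.odd_iff.mp ho
      rw [h2]
      constructor
      · intro h
        have hsum : (Nat.digits 2 (t / 2)).sum = 0 := by omega
        have htd : t / 2 = 0 := by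
          by_contra hne
          have := sum_digits_two_pos (t / 2) (Nat.pos_of_ne_zero hne)
          omega
        exact ⟨0, by omega⟩
      · rintro ⟨j, hj⟩
        rcases j with _ | j
        · simp at hj; subst hj; simp
        · exfalso
          rw [pow_succ] at hj
          omega

theorem binary_ones_between (r₁ i ℓ : ℕ) (hr : 1 ≤ r₁)
    (hi : (Nat.digits 2 r₁).sum = i) (hℓ : 1 ≤ ℓ)
    (hdvd : 2 ^ ℓ ∣ r₁) (hndvd : ¬ 2 ^ (ℓ + 1) ∣ r₁) :
    ∀ s : ℕ, r₁ < s → s < r₁ + 2 ^ ℓ →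
      ((Nat.digits 2 s).sum ≤ i + 1 ↔ ∃ j < ℓ, s = r₁ + 2 ^ j) := by
  obtain ⟨m, hm⟩ := hdvd
  have hmpos : 0 < m := by
    rcases Nat.eq_zero_or_pos m with h | h
    · subst h; simp at hm; omega
    · exact h
  -- digit sum of r₁ equals digit sum of m
  have hrsum : (Nat.digits 2 r₁).sum = (Nat.digits 2 m).sum := by
    rw [hm, Nat.digits_base_pow_mul one_lt_two hmpos, List.sum_append,
      List.sum_replicate, smul_zero, Nat.zero_add]
  intro s hs1 hs2
  set t := s - r₁ with hts
  have htpos : 0 < t := by omega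
  have htlt : t < 2 ^ ℓ := by omega
  have hst : s = t + 2 ^ ℓ * m := by omega
  -- length of digits of t is at most ℓ
  have hlen : (Nat.digits 2 t).length ≤ ℓ := by
    rw [Nat.digits_len 2 t one_lt_two (by omega)]
    have := Nat.log_lt_of_lt_pow (b := 2) (by omega : t ≠ 0) htlt
    omega
  -- digit sum of s equals digit sum of t plus digit sum of m
  have hssum : (Nat.digits 2 s).sum = (Nat.digits 2 t).sum + (Nat.digits 2 m).sum := by
    have key := Nat.digits_append_zeroes_append_digits
      (b := 2) (k := ℓ - (Nat.digits 2 t).length) (m := m) (n := t) one_lt_two hmpos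
    rw [Nat.add_sub_cancel' hlen] at key
    rw [hst, ← key, List.sum_append, List.sum_append, List.sum_replicate, smul_zero]
    omega
  rw [hssum, ← hrsum, hi]
  have hiff := sum_digits_two_le_one_iff t htpos
  constructor
  · intro h
    obtain ⟨j, hj⟩ := hiff.mp (by omega)
    refine ⟨j, ?_, by omega⟩
    by_contra hjl
    have : 2 ^ ℓ ≤ 2 ^ j := Nat.pow_le_pow_right (by norm_num) (by omega)
    omega
  · rintro ⟨j, hjl, hj⟩
    have : (Nat.digits 2 t).sum ≤ 1 := hiff.mpr ⟨j, by omega⟩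
    omega
end

section
/- Let T be the infinite rooted tree in which every node at depth i (the root having depth 0) has exactly i + 2 children. Then for every k ≥ 1, the maximum, over all subtrees T' of T with k nodes containing the root, of the sum of the T-degrees of the nodes of T' equals k(k+3)/2, and this maximum is achieved by a path of length k starting at the root. -/
open Finset

-- all "iterated tails" (drops) of a member of a tail-closed set are members
lemma drop_mem_of_tail_closed (S : Finset (List ℕ)) (h0 : [] ∈ S)
    (hT : ∀ (a : ℕ) (l : List ℕ), (a :: l) ∈ S → l ∈ S)
    (m : List ℕ) (hm : m ∈ S) : ∀ i, m.drop i ∈ S := by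
  intro i
  induction i with
  | zero => simpa using hm
  | succ i ih =>
    have : m.drop (i+1) = (m.drop i).drop 1 := by
      rw [List.drop_drop]
    rw [this]
    cases h : m.drop i with
    | nil => simpa using h0
    | cons a l =>
      rw [h] at ih
      simpa using hT a l ih

lemma length_lt_card (S : Finset (List ℕ)) (h0 : [] ∈ S)
    (hT : ∀ (a : ℕ) (l : List ℕ), (a :: l) ∈ S → l ∈ S)
    (m : List ℕ) (hm : m ∈ S) : m.length < S.card := by
  have hsub : (Finset.range (m.length + 1)).image (fun i => m.drop i) ⊆ S := by
    intro x hx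
    simp only [Finset.mem_image, Finset.mem_range] at hx
    obtain ⟨i, _, rfl⟩ := hx
    exact drop_mem_of_tail_closed S h0 hT m hm i
  have hinj : Set.InjOn (fun i => m.drop i) (Finset.range (m.length + 1)) := by
    intro i hi j hj hij
    simp only [Finset.coe_range, Set.mem_Iio] at hi hj
    have : (m.drop i).length = (m.drop j).length := congrArg List.length hij
    simp only [List.length_drop] at this
    omega
  have := Finset.card_le_card hsub
  rwa [Finset.card_image_of_injOn hinj, Finset.card_range] at this

lemma upper_bound : ∀ (k : ℕ) (S : Finset (List ℕ)), [] ∈ S → S.card = k →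
    (∀ (a : ℕ) (l : List ℕ), (a :: l) ∈ S → l ∈ S) →
    2 * ∑ l ∈ S, (l.length + 2) ≤ k * (k + 3) := by
  intro k
  induction k with
  | zero =>
    intro S h0 hc _
    rw [Finset.card_eq_zero] at hc
    simp [hc] at h0
  | succ k ih =>
    intro S h0 hc hT
    obtain ⟨m, hm, hmax⟩ := S.exists_max_image List.length ⟨[], h0⟩
    have hlen : m.length ≤ k := by
      have := length_lt_card S h0 hT m hm
      omega
    rcases Nat.eq_zero_or_pos k with hk0 | hkpos
    · subst hk0
      have : S = {[]} := by
        apply Finset.eq_singleton_iff_unique_mem.mpr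
        refine ⟨h0, fun x hx => ?_⟩
        have : m.length = 0 := by omega
        have hmnil : m = [] := List.length_eq_zero_iff.mp this
        have hxm := hmax x hx
        rw [hmnil] at hxm
        simp only [List.length_nil, Nat.le_zero] at hxm
        exact List.length_eq_zero_iff.mp hxm
      simp [this]
    · -- k ≥ 1 : remove m
      have hmne : m ≠ [] := by
        have : (S.erase []).Nonempty := by
          rw [← Finset.card_pos, Finset.card_erase_of_mem h0, hc]; omega
        obtain ⟨x, hx⟩ := this
        have hxS := Finset.mem_of_mem_erase hx
        have hxne := Finset.ne_of_mem_erase hx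
        have hx1 : 1 ≤ x.length := by
          cases x with
          | nil => exact absurd rfl hxne
          | cons a l => simp
        have hxl := hmax x hxS
        intro h
        rw [h] at hxl
        simp only [List.length_nil, Nat.le_zero] at hxl
        omega
      set S' := S.erase m with hS'
      have h0' : [] ∈ S' := Finset.mem_erase.mpr ⟨Ne.symm hmne, h0⟩
      have hc' : S'.card = k := by
        rw [hS', Finset.card_erase_of_mem hm, hc]
        omega
      have hT' : ∀ (a : ℕ) (l : List ℕ), (a :: l) ∈ S' → l ∈ S' := by
        intro a l hl
        have hlS : l ∈ S := hT a l (Finset.mem_of_mem_erase hl)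
        refine Finset.mem_erase.mpr ⟨?_, hlS⟩
        have := hmax (a :: l) (Finset.mem_of_mem_erase hl)
        intro h; subst h
        simp at this
      have ihS' := ih S' h0' hc' hT'
      have hsum : ∑ l ∈ S, (l.length + 2) = (m.length + 2) + ∑ l ∈ S', (l.length + 2) :=
        (Finset.add_sum_erase S (fun l => l.length + 2) hm).symm
      have key : k * (k + 3) + 2 * (k + 2) = (k + 1) * ((k + 1) + 3) := by ring
      omega

lemma gauss_like : ∀ n : ℕ, 2 * ∑ i ∈ Finset.range n, (i + 2) = n * (n + 3) := by
  intro n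
  induction n with
  | zero => simp
  | succ n ihn =>
    rw [Finset.sum_range_succ]
    have : n * (n + 3) + 2 * (n + 2) = (n + 1) * ((n + 1) + 3) := by ring
    omega

theorem increasing_degree_tree_D (k : ℕ) (hk : 1 ≤ k) :
    IsGreatest
      { d : ℕ | ∃ S : Finset (List ℕ),
          ([] ∈ S) ∧ S.card = k ∧
          (∀ l ∈ S, ∀ (a : ℕ) (l' : List ℕ), (a :: l') <:+ l → a < l'.length + 2) ∧
          (∀ (a : ℕ) (l : List ℕ), (a :: l) ∈ S → l ∈ S) ∧
          d = ∑ l ∈ S, (l.length + 2) }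
      (k * (k + 3) / 2) ∧
    ∃ S : Finset (List ℕ),
      ([] ∈ S) ∧ S.card = k ∧
      (∀ l ∈ S, ∀ (a : ℕ) (l' : List ℕ), (a :: l') <:+ l → a < l'.length + 2) ∧
      (∀ (a : ℕ) (l : List ℕ), (a :: l) ∈ S → l ∈ S) ∧
      (∀ l₁ ∈ S, ∀ l₂ ∈ S, l₁ <:+ l₂ ∨ l₂ <:+ l₁) ∧
      (∑ l ∈ S, (l.length + 2)) = k * (k + 3) / 2 := by
  -- witness: the path of all-zero lists
  set S : Finset (List ℕ) := (Finset.range k).image (fun i => List.replicate i 0) with hSdef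
  have hmemS : ∀ l, l ∈ S ↔ ∃ i < k, List.replicate i 0 = l := by
    intro l; simp [hSdef]
  have h0 : [] ∈ S := (hmemS []).mpr ⟨0, hk, rfl⟩
  have hcard : S.card = k := by
    rw [hSdef, Finset.card_image_of_injOn, Finset.card_range]
    intro i _ j _ hij
    have : (List.replicate i (0:ℕ)).length = (List.replicate j (0:ℕ)).length :=
      congrArg List.length hij
    simpa using this
  have hvalid : ∀ l ∈ S, ∀ (a : ℕ) (l' : List ℕ), (a :: l') <:+ l → a < l'.length + 2 := by
    intro l hl a l' hsuf
    obtain ⟨i, _, rfl⟩ := (hmemS l).mp hl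
    have ha : a ∈ List.replicate i (0:ℕ) := hsuf.subset (by simp)
    have : a = 0 := List.eq_of_mem_replicate ha
    omega
  have hTcl : ∀ (a : ℕ) (l : List ℕ), (a :: l) ∈ S → l ∈ S := by
    intro a l hl
    obtain ⟨i, hi, heq⟩ := (hmemS (a :: l)).mp hl
    cases i with
    | zero => simp at heq
    | succ j =>
      rw [List.replicate_succ] at heq
      have : l = List.replicate j 0 := by
        injection heq with _ h2; exact h2.symm
      exact (hmemS l).mpr ⟨j, by omega, this.symm⟩
  have hchain : ∀ l₁ ∈ S, ∀ l₂ ∈ S, l₁ <:+ l₂ ∨ l₂ <:+ l₁ := by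
    have key : ∀ i j : ℕ, i ≤ j → List.replicate i (0:ℕ) <:+ List.replicate j 0 := by
      intro i j hij
      exact ⟨List.replicate (j - i) 0, by rw [← List.replicate_add]; congr 1; omega⟩
    intro l₁ h₁ l₂ h₂
    obtain ⟨i, _, rfl⟩ := (hmemS l₁).mp h₁
    obtain ⟨j, _, rfl⟩ := (hmemS l₂).mp h₂
    rcases le_total i j with h | h
    · exact Or.inl (key i j h)
    · exact Or.inr (key j i h)
  have hsum2 : 2 * ∑ l ∈ S, (l.length + 2) = k * (k + 3) := by
    rw [hSdef, Finset.sum_image (by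
      intro i _ j _ hij
      have : (List.replicate i (0:ℕ)).length = (List.replicate j (0:ℕ)).length :=
        congrArg List.length hij
      simpa using this)]
    simp only [List.length_replicate]
    exact gauss_like k
  have hsum : ∑ l ∈ S, (l.length + 2) = k * (k + 3) / 2 := by omega
  refine ⟨⟨⟨S, h0, hcard, hvalid, hTcl, hsum.symm⟩, ?_⟩,
    S, h0, hcard, hvalid, hTcl, hchain, hsum⟩
  rintro d ⟨T, hT0, hTc, _, hTcl', rfl⟩
  have := upper_bound k T hT0 hTc hTcl'
  omega
end
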